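/- Under the S_R exchange relations, let M ∈ M_N(ℂ) be a constant matrix with M² = I and set t̃_M(k) = tr(M·b(k)) = Σ_{i,j} M_{ji} b_{ij}(k). Then for all real k₁ ≠ ±k₂, [t̃_M(k₁), t̃_M(k₂)] = 0 in A. -/

import Mathlib

/-!
Write `α = ig/(k₁-k₂)`, `β = ig/(k₁+k₂)`, `γ = g²/(k₁²-k₂²)`. Then `αβ + γ = 0`, and since `α`, `β`
are purely imaginary, `1 - α² ≠ 0` and `1 + βN ≠ 0`.

Contracting the exchange relation with `P_ji Q_lk`, resp. with `P_li Q_jk`, gives two linear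
relations between `[tr(P b₁), tr(Q b₂)]`, the crossed traces `tr(b₁ Q b₂ P) - tr(b₂ P b₁ Q)`, and
traces of `b₁ b₂` and `b₂ b₁`. For `P = Q = 1` they form an invertible system with determinant
`(1 - α²)(1 + βN)`, forcing `tr(b₁ b₂) = tr(b₂ b₁)`. For `P = Q = M` with `M² = 1`, eliminating the
crossed traces then leaves `(1 - α²) [t̃_M(k₁), t̃_M(k₂)] = -(αβ + γ) tr M · tr(M [b₂, b₁]) = 0`.
-/

open Matrix Finset

section

variable {n : Type*} [Fintype n] {R A : Type*} [CommRing R] [Ring A] [Algebra R A]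

lemma Finset.sum_comm₁₃ {S : Type*} [AddCommMonoid S] (f : n → n → n → S) :
    ∑ i, ∑ j, ∑ k, f i j k = ∑ i, ∑ j, ∑ k, f k j i := by
  rw [sum_comm]
  simp_rw [sum_comm (γ := n) (s := univ) (t := univ) (f := fun i k => f i _ k)]
  rw [sum_comm]

/-- `traceMul P x = tr (P x)` and `traceMulMul P Q x y = tr (x Q y P)`, the scalar matrices acting
on the entries of `x` and `y` through the algebra structure. -/
def traceMul (P : Matrix n n R) (x : Matrix n n A) : A := ∑ i, ∑ j, P j i • x i j

def traceMulMul (P Q : Matrix n n R) (x y : Matrix n n A) : A :=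
  ∑ i, ∑ j, ∑ k, ∑ l, (P l i * Q j k) • (x i j * y k l)

lemma traceMul_sub (P : Matrix n n R) (x y : Matrix n n A) :
    traceMul P (x - y) = traceMul P x - traceMul P y := by
  simp only [traceMul, Matrix.sub_apply, smul_sub, sum_sub_distrib]

lemma traceMul_mul (P Q : Matrix n n R) (z : Matrix n n A) :
    traceMul (P * Q) z = ∑ i, ∑ j, ∑ k, (P j k * Q k i) • z i j := by
  simp only [traceMul, mul_apply, sum_smul]

lemma traceMul_mul_traceMul (P Q : Matrix n n R) (x y : Matrix n n A) :
    traceMul P x * traceMul Q y = ∑ i, ∑ j, ∑ k, ∑ l, (P j i * Q l k) • (x i j * y k l) := by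
  simp_rw [traceMul, sum_mul]
  simp_rw [mul_sum, smul_mul_smul_comm]

lemma traceMul_mul_traceMul' (P Q : Matrix n n R) (x y : Matrix n n A) :
    traceMul Q y * traceMul P x = ∑ i, ∑ j, ∑ k, ∑ l, (P j i * Q l k) • (y k l * x i j) := by
  simp_rw [traceMul, mul_sum]
  simp_rw [sum_mul, smul_mul_smul_comm, mul_comm (Q _ _)]

lemma traceMulMul_swap (P Q : Matrix n n R) (x y : Matrix n n A) :
    traceMulMul Q P y x = ∑ i, ∑ j, ∑ k, ∑ l, (P l i * Q j k) • (y k l * x i j) := by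
  rw [traceMulMul, sum_comm₁₃]
  refine sum_congr rfl fun i _ => ?_
  rw [sum_comm₁₃ (fun j k l => _)]
  simp only [mul_comm (Q _ _)]

lemma trace_smul_traceMul (P Q : Matrix n n R) (z : Matrix n n A) :
    trace P • traceMul Q z = ∑ i, ∑ j, ∑ k, (P i i * Q k j) • z j k := by
  rw [traceMul, trace, sum_smul]
  simp only [Matrix.diag, smul_sum, mul_smul]

variable [DecidableEq n]

lemma traceMul_one (x : Matrix n n A) : traceMul (1 : Matrix n n R) x = trace x := by
  simp [traceMul, one_apply, trace]

lemma traceMulMul_one_one (x y : Matrix n n A) :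
    traceMulMul (1 : Matrix n n R) 1 x y = trace (x * y) := by
  simp [traceMulMul, one_apply, trace, mul_apply]

/-- The `S_R` exchange relation between `x = b(k₁)` and `y = b(k₂)`, for the scalars `α, β, γ` of
the header. -/
def ExchangeRelation (α β γ : R) (x y : Matrix n n A) : Prop :=
  ∀ i j k l, x i j * y k l - y k l * x i j =
    α • (y k j * x i l - x k j * y i l)
    + β • ((if i = l then (y * x) k j else 0) - (if k = j then (x * y) i l else 0))
    - γ • (if i = j then (y * x - x * y) k l else 0)

namespace ExchangeRelation

section

variable {α β γ : R} {x y : Matrix n n A}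

lemma sum_smul_commutator (h : ExchangeRelation α β γ x y) (c : n → n → n → n → R) :
    ∑ i, ∑ j, ∑ k, ∑ l, c i j k l • (x i j * y k l - y k l * x i j) =
      α • ∑ i, ∑ j, ∑ k, ∑ l, c i j k l • (y k j * x i l - x k j * y i l)
      + β • (∑ i, ∑ j, ∑ k, c i j k i • (y * x) k j - ∑ i, ∑ j, ∑ l, c i j j l • (x * y) i l)
      - γ • ∑ i, ∑ k, ∑ l, c i i k l • (y * x - x * y) k l := by
  unfold ExchangeRelation at h
  simp only [h, smul_add, smul_sub, sum_add_distrib, sum_sub_distrib, smul_sum,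
    smul_comm (c _ _ _ _), smul_ite, smul_zero, sum_ite_irrel, sum_const_zero, sum_ite_eq,
    sum_ite_eq', mem_univ, if_true]

lemma traceMul_commutator (h : ExchangeRelation α β γ x y) (P Q : Matrix n n R) :
    traceMul P x * traceMul Q y - traceMul Q y * traceMul P x =
      α • (traceMulMul Q P y x - traceMulMul Q P x y)
      + β • (traceMul (P * Q) (y * x) - traceMul (Q * P) (x * y))
      - γ • (trace P • traceMul Q (y * x - x * y)) := by
  rw [traceMul_mul_traceMul, traceMul_mul_traceMul']
  simp_rw [← sum_sub_distrib, ← smul_sub]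
  rw [h.sum_smul_commutator]
  congr 3
  · simp only [smul_sub, sum_sub_distrib, traceMulMul]
    rw [sum_comm₁₃, sum_comm₁₃ (fun i j k => ∑ l, (P j i * Q l k) • (x k j * y i l))]
    simp only [mul_comm (P _ _)]
  · rw [traceMul_mul, traceMul_mul, sum_comm₁₃]
    congr 1
    refine sum_congr rfl fun i _ => ?_
    rw [sum_comm]
    simp only [mul_comm (P _ _)]
  · rw [trace_smul_traceMul]

lemma traceMulMul_sub_traceMulMul (h : ExchangeRelation α β γ x y) (P Q : Matrix n n R) :
    traceMulMul P Q x y - traceMulMul Q P y x =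
      α • (traceMul Q y * traceMul P x - traceMul Q x * traceMul P y)
      + β • (trace P • traceMul Q (y * x) - trace Q • traceMul P (x * y))
      - γ • traceMul (P * Q) (y * x - x * y) := by
  rw [traceMulMul_swap P Q x y, traceMulMul]
  simp_rw [← sum_sub_distrib, ← smul_sub]
  rw [h.sum_smul_commutator]
  congr 2
  · congr 1
    simp only [smul_sub, sum_sub_distrib, traceMul_mul_traceMul]
    rw [sum_comm₁₃, sum_comm₁₃ (fun i j k => ∑ l, (P l i * Q j k) • (x k j * y i l))]
    simp only [mul_comm (P _ _)]
  · congr 1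
    rw [trace_smul_traceMul, trace_smul_traceMul]
    congr 1
    · exact sum_congr rfl fun i _ => sum_comm
    · rw [sum_comm]
      simp only [mul_comm (P _ _)]
  · rw [traceMul_mul, sum_comm]
    exact sum_congr rfl fun k _ => sum_comm

end

variable {K : Type*} [Field K] [Algebra K A] {α β γ : K} {x y : Matrix n n A}

lemma trace_mul_comm (h : ExchangeRelation α β γ x y) (hαβγ : α * β + γ = 0)
    (hα : 1 - α ^ 2 ≠ 0) (hβ : 1 + β * Fintype.card n ≠ 0) :
    trace (x * y) = trace (y * x) := by
  obtain rfl : γ = -(α * β) := eq_neg_of_add_eq_zero_right hαβγ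
  have hA := h.traceMul_commutator 1 1
  have hB := h.traceMulMul_sub_traceMulMul 1 1
  simp only [traceMul_one, traceMulMul_one_one, one_mul, trace_one, trace_sub] at hA hB
  have hD : ((1 - α ^ 2) * (1 + β * Fintype.card n)) • (trace (x * y) - trace (y * x)) = 0 := by
    linear_combination (norm := module) hB - α • hA
  exact sub_eq_zero.mp ((smul_eq_zero.mp hD).resolve_left (mul_ne_zero hα hβ))

lemma traceMul_commute (h : ExchangeRelation α β γ x y) (hαβγ : α * β + γ = 0)
    (hα : 1 - α ^ 2 ≠ 0) (hβ : 1 + β * Fintype.card n ≠ 0) {M : Matrix n n K} (hM : M * M = 1) :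
    traceMul M x * traceMul M y = traceMul M y * traceMul M x := by
  have htr := h.trace_mul_comm hαβγ hα hβ
  obtain rfl : γ = -(α * β) := eq_neg_of_add_eq_zero_right hαβγ
  have hA := h.traceMul_commutator M M
  have hB := h.traceMulMul_sub_traceMulMul M M
  simp only [hM, traceMul_one, htr, traceMul_sub, sub_self, smul_zero] at hA hB
  have hT : (1 - α ^ 2) • (traceMul M x * traceMul M y - traceMul M y * traceMul M x) = 0 := by
    linear_combination (norm := module) hA - α • hB
  exact sub_eq_zero.mp ((smul_eq_zero.mp hT).resolve_left hα)

end ExchangeRelation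

end

lemma Complex.one_sub_I_mul_ofReal_sq_ne_zero (r : ℝ) : 1 - (Complex.I * r) ^ 2 ≠ 0 := by
  rw [mul_pow, Complex.I_sq, neg_one_mul, sub_neg_eq_add]
  exact_mod_cast (by positivity : (1 + r ^ 2 : ℝ) ≠ 0)

lemma Complex.one_add_I_mul_ofReal_ne_zero (r : ℝ) : 1 + Complex.I * r ≠ 0 := by
  intro h
  simpa using congrArg Complex.re h

theorem tM_commute_general (N : ℕ) (g : ℝ)
    (A : Type*) [Ring A] [Algebra ℂ A]
    (b : ℝ → Fin N → Fin N → A)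
    (hSR : ∀ k₁ k₂ : ℝ, k₁ ≠ k₂ → k₁ ≠ -k₂ → ∀ i j k l : Fin N,
      b k₁ i j * b k₂ k l - b k₂ k l * b k₁ i j =
        ((Complex.I * (g : ℂ)) / ((k₁ : ℂ) - (k₂ : ℂ))) •
            (b k₂ k j * b k₁ i l - b k₁ k j * b k₂ i l)
        + ((Complex.I * (g : ℂ)) / ((k₁ : ℂ) + (k₂ : ℂ))) •
            ((if i = l then ∑ a : Fin N, b k₂ k a * b k₁ a j else 0)
              - (if k = j then ∑ a : Fin N, b k₁ i a * b k₂ a l else 0))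
        - (((g : ℂ) ^ 2) / ((k₁ : ℂ) ^ 2 - (k₂ : ℂ) ^ 2)) •
            (if i = j then
              ∑ a : Fin N, (b k₂ k a * b k₁ a l - b k₁ k a * b k₂ a l)
             else 0))
    (M : Matrix (Fin N) (Fin N) ℂ) (hM : M * M = 1) :
    ∀ k₁ k₂ : ℝ, k₁ ≠ k₂ → k₁ ≠ -k₂ →
      (∑ p : Fin N, ∑ q : Fin N, M q p • b k₁ p q) *
          (∑ p : Fin N, ∑ q : Fin N, M q p • b k₂ p q)
        - (∑ p : Fin N, ∑ q : Fin N, M q p • b k₂ p q) *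
            (∑ p : Fin N, ∑ q : Fin N, M q p • b k₁ p q) = 0 := by
  intro k₁ k₂ hne hne'
  have h : ExchangeRelation (Complex.I * g / (k₁ - k₂)) (Complex.I * g / (k₁ + k₂))
      (g ^ 2 / (k₁ ^ 2 - k₂ ^ 2)) (b k₁) (b k₂) := fun i j k l => by
    rw [hSR k₁ k₂ hne hne' i j k l]
    simp only [sum_sub_distrib]
    rfl
  have hαβγ : Complex.I * g / (k₁ - k₂) * (Complex.I * g / (k₁ + k₂))
      + g ^ 2 / ((k₁ : ℂ) ^ 2 - k₂ ^ 2) = 0 := by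
    rw [div_mul_div_comm, show ((k₁ : ℂ) - k₂) * (k₁ + k₂) = k₁ ^ 2 - k₂ ^ 2 by ring, ← add_div,
      mul_mul_mul_comm, Complex.I_mul_I]
    ring
  have hα : 1 - (Complex.I * g / (k₁ - k₂)) ^ 2 ≠ 0 := by
    convert Complex.one_sub_I_mul_ofReal_sq_ne_zero (g / (k₁ - k₂)) using 4
    push_cast
    ring
  have hβ : 1 + Complex.I * g / (k₁ + k₂) * Fintype.card (Fin N) ≠ 0 := by
    convert Complex.one_add_I_mul_ofReal_ne_zero (g / (k₁ + k₂) * N) using 2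
    rw [Fintype.card_fin]
    push_cast
    ring
  exact sub_eq_zero.mpr (h.traceMul_commute hαβγ hα hβ hM)

/-- Under the S_R exchange relations, for a constant matrix `M` with `M² = I`,
the elements `t̃_M(k) = tr(M b(k))` commute: `[t̃_M(k₁), t̃_M(k₂)] = 0`. -/
theorem tM_commute (N : ℕ) (hN : 1 ≤ N) (g : ℝ) (hg : 0 < g)
    (A : Type*) [Ring A] [Algebra ℂ A]
    (b : ℝ → Fin N → Fin N → A)
    (hSR : ∀ k₁ k₂ : ℝ, k₁ ≠ k₂ → k₁ ≠ -k₂ → ∀ i j k l : Fin N,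
      b k₁ i j * b k₂ k l - b k₂ k l * b k₁ i j =
        ((Complex.I * (g : ℂ)) / ((k₁ : ℂ) - (k₂ : ℂ))) •
            (b k₂ k j * b k₁ i l - b k₁ k j * b k₂ i l)
        + ((Complex.I * (g : ℂ)) / ((k₁ : ℂ) + (k₂ : ℂ))) •
            ((if i = l then ∑ a : Fin N, b k₂ k a * b k₁ a j else 0)
              - (if k = j then ∑ a : Fin N, b k₁ i a * b k₂ a l else 0))
        - (((g : ℂ) ^ 2) / ((k₁ : ℂ) ^ 2 - (k₂ : ℂ) ^ 2)) •
            (if i = j then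
              ∑ a : Fin N, (b k₂ k a * b k₁ a l - b k₁ k a * b k₂ a l)
             else 0))
    (M : Matrix (Fin N) (Fin N) ℂ) (hM : M * M = 1) :
    ∀ k₁ k₂ : ℝ, k₁ ≠ k₂ → k₁ ≠ -k₂ →
      (∑ p : Fin N, ∑ q : Fin N, M q p • b k₁ p q) *
          (∑ p : Fin N, ∑ q : Fin N, M q p • b k₂ p q)
        - (∑ p : Fin N, ∑ q : Fin N, M q p • b k₂ p q) *
            (∑ p : Fin N, ∑ q : Fin N, M q p • b k₁ p q) = 0 :=
  tM_commute_general N g A b hSR M hM
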